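/- Every coherent pure state has coherence weight 1: if ψ ∈ ℂ^d is a unit vector and the rank-one density matrix ρ = |ψ⟩⟨ψ| is not diagonal in the standard basis, then C_w(ρ) = 1. -/

import Mathlib

open Matrix BigOperators
open scoped ComplexOrder

noncomputable section

/-- A density matrix: positive semidefinite with unit trace. -/
def IsDensity [Fintype n] (ρ : Matrix n n ℂ) : Prop :=
  ρ.PosSemidef ∧ ρ.trace = 1

/-- A matrix is incoherent if it is diagonal in the fixed (standard) basis. -/
def IsIncoherent {n : Type*} (σ : Matrix n n ℂ) : Prop :=
  ∀ i j, i ≠ j → σ i j = 0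

/-- The coherence weight of a state `ρ`. -/
noncomputable def cohWeight [Fintype n] (ρ : Matrix n n ℂ) : ℝ :=
  sInf {s : ℝ | s ∈ Set.Icc (0 : ℝ) 1 ∧
    ∃ σ τ : Matrix n n ℂ,
      IsDensity σ ∧ IsIncoherent σ ∧ IsDensity τ ∧
      ρ = (1 - s) • σ + s • τ}
/-!
If `ρ = |ψ⟩⟨ψ| = (1 - s) σ + s τ` with `s < 1` and `σ, τ ⪰ 0`, then every `v ⟂ ψ` has `ρ v = 0`,
hence `σ v = 0`. When `ψ` has two nonzero coordinates, for every index `k` such a `v` can be chosen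
with `v k ≠ 0`; for diagonal `σ` this forces `σ k k = 0`, so `σ = 0`, contradicting `tr σ = 1`.
The value `s = 1` is attained with `σ = diag ρ` and `τ = ρ`.
-/

namespace Matrix

variable {n R : Type*}

theorem PosSemidef.mulVec_eq_zero_of_add_mulVec_eq_zero [Fintype n] {𝕜 : Type*} [RCLike 𝕜]
    {A B : Matrix n n 𝕜} (hA : A.PosSemidef) (hB : B.PosSemidef) {v : n → 𝕜}
    (h : (A + B) *ᵥ v = 0) : A *ᵥ v = 0 := by
  have hsum : star v ⬝ᵥ A *ᵥ v + star v ⬝ᵥ B *ᵥ v = 0 := by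
    rw [← dotProduct_add, ← add_mulVec, h, dotProduct_zero]
  have hA0 := ((add_eq_zero_iff_of_nonneg (hA.dotProduct_mulVec_nonneg v)
    (hB.dotProduct_mulVec_nonneg v)).mp hsum).1
  exact (hA.dotProduct_mulVec_zero_iff v).mp hA0

theorem IsDiag.apply_self_eq_zero_of_mulVec_eq_zero [Fintype n] [DecidableEq n] [Semiring R]
    [NoZeroDivisors R] {σ : Matrix n n R} (hσ : σ.IsDiag) {v : n → R} (h : σ *ᵥ v = 0) {k : n}
    (hk : v k ≠ 0) : σ k k = 0 := by
  have hk' : (diagonal σ.diag *ᵥ v) k = 0 := by rw [hσ.diagonal_diag, h, Pi.zero_apply]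
  rw [mulVec_diagonal] at hk'
  exact (mul_eq_zero.mp hk').resolve_right hk

theorem vecMulVec_mulVec_eq_zero [Fintype n] [Semiring R] (u : n → R) {w v : n → R}
    (h : w ⬝ᵥ v = 0) : vecMulVec u w *ᵥ v = 0 := by
  rw [vecMulVec_mulVec, h, MulOpposite.op_zero, zero_smul]

theorem exists_dotProduct_eq_zero_apply_ne_zero [Fintype n] [DecidableEq n] [CommRing R]
    (u : n → R) {k m : n} (hmk : m ≠ k) (hm : u m ≠ 0) :
    ∃ v : n → R, u ⬝ᵥ v = 0 ∧ v k ≠ 0 :=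
  ⟨Pi.single k (u m) - Pi.single m (u k), by
    simp only [dotProduct_sub, dotProduct_single, mul_comm, sub_self], by
    simpa [Pi.single_apply, hmk.symm] using hm⟩

theorem exists_ne_apply_ne_zero_of_not_isDiag_vecMulVec [NonUnitalNonAssocSemiring R] [StarRing R]
    {ψ : n → R} (h : ¬ (vecMulVec ψ (star ψ)).IsDiag) (k : n) : ∃ m, m ≠ k ∧ ψ m ≠ 0 := by
  obtain ⟨i, j, hij, hψij⟩ : ∃ i j, i ≠ j ∧ ψ i * star (ψ j) ≠ 0 := by
    simpa [IsDiag, Pairwise, vecMulVec_apply] using h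
  rcases eq_or_ne i k with rfl | hik
  · exact ⟨j, hij.symm, star_ne_zero.mp (right_ne_zero_of_mul hψij)⟩
  · exact ⟨i, hik, left_ne_zero_of_mul hψij⟩

theorem IsDiag.eq_zero_of_vecMulVec_eq_add [Fintype n] {ψ : n → ℂ}
    (hψ : ¬ (vecMulVec ψ (star ψ)).IsDiag) {σ τ : Matrix n n ℂ} (hσ : σ.PosSemidef)
    (hσd : σ.IsDiag) (hτ : τ.PosSemidef) {s : ℝ} (hs0 : 0 ≤ s) (hs1 : s < 1)
    (h : vecMulVec ψ (star ψ) = (1 - s) • σ + s • τ) : σ = 0 := by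
  classical
  ext k l
  rcases eq_or_ne k l with rfl | hkl
  · obtain ⟨m, hmk, hm⟩ := exists_ne_apply_ne_zero_of_not_isDiag_vecMulVec hψ k
    obtain ⟨v, hv, hvk⟩ :=
      exists_dotProduct_eq_zero_apply_ne_zero (star ψ) hmk (star_ne_zero.mpr hm)
    have hρv : ((1 - s) • σ + s • τ) *ᵥ v = 0 := h ▸ vecMulVec_mulVec_eq_zero ψ hv
    have hσv : ((1 - s) • σ) *ᵥ v = 0 :=
      (hσ.smul (sub_nonneg.mpr hs1.le)).mulVec_eq_zero_of_add_mulVec_eq_zero (hτ.smul hs0) hρv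
    rw [smul_mulVec, smul_eq_zero] at hσv
    exact hσd.apply_self_eq_zero_of_mulVec_eq_zero
      (hσv.resolve_left (sub_ne_zero.mpr hs1.ne')) hvk
  · exact hσd hkl

end Matrix

section

variable {n : Type*}

theorem isIncoherent_iff_isDiag {σ : Matrix n n ℂ} : IsIncoherent σ ↔ σ.IsDiag :=
  Iff.rfl

theorem IsDensity.diagonal_diag [Fintype n] [DecidableEq n] {ρ : Matrix n n ℂ}
    (hρ : IsDensity ρ) : IsDensity (diagonal ρ.diag) :=
  ⟨posSemidef_diagonal_iff.mpr fun _ => hρ.1.diag_nonneg, by rw [trace_diagonal]; exact hρ.2⟩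

theorem isDensity_vecMulVec_self_star [Fintype n] {ψ : n → ℂ}
    (hψ : ∑ i, ‖ψ i‖ ^ 2 = 1) : IsDensity (vecMulVec ψ (star ψ)) := by
  refine ⟨posSemidef_vecMulVec_self_star ψ, ?_⟩
  simp only [trace_vecMulVec, dotProduct, Pi.star_apply, Complex.star_def, Complex.mul_conj']
  exact_mod_cast hψ

theorem cohWeight_eq_one_of_forall_ne [Fintype n] {ρ : Matrix n n ℂ} (hρ : IsDensity ρ)
    (h : ∀ (s : ℝ) (σ τ : Matrix n n ℂ), 0 ≤ s → s < 1 → IsDensity σ → IsIncoherent σ →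
      IsDensity τ → ρ ≠ (1 - s) • σ + s • τ) :
    cohWeight ρ = 1 := by
  classical
  refine IsLeast.csInf_eq ⟨⟨Set.right_mem_Icc.mpr zero_le_one, diagonal ρ.diag, ρ,
    hρ.diagonal_diag, isDiag_diagonal _, hρ, by simp⟩, ?_⟩
  rintro s ⟨⟨hs0, -⟩, σ, τ, hσ, hσd, hτ, hρs⟩
  by_contra! hs1
  exact h s σ τ hs0 hs1 hσ hσd hτ hρs

end

theorem cohWeight_pure_coherent_eq_one {d : ℕ}
    (ψ : Fin d → ℂ) (hψ : ∑ i, ‖ψ i‖ ^ 2 = 1)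
    (hcoh : ¬ IsIncoherent (Matrix.vecMulVec ψ (star ψ))) :
    cohWeight (Matrix.vecMulVec ψ (star ψ)) = 1 := by
  refine cohWeight_eq_one_of_forall_ne (isDensity_vecMulVec_self_star hψ)
    fun s σ τ hs0 hs1 hσ hσd hτ h => ?_
  have hσ0 : σ = 0 := (isIncoherent_iff_isDiag.mp hσd).eq_zero_of_vecMulVec_eq_add
    (isIncoherent_iff_isDiag.not.mp hcoh) hσ.1 hτ.1 hs0 hs1 h
  simpa [hσ0] using hσ.2
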